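/- The embedded chain P of the GI/M/1 queue with parameter z > 1 is transient (i.e., its Green matrix G(i,j) = ∑_{k=0}^∞ P^k(i,j) is finite for all i,j) if and only if z > 2; equivalently, for 1 < z ≤ 2 the chain is recurrent. -/

import Mathlib

open scoped ENNReal
open Filter Topology

/-- Matrix powers of a nonnegative kernel on ℕ, values in `[0,∞]`. -/
noncomputable def matPow (P : ℕ → ℕ → ℝ≥0∞) : ℕ → ℕ → ℕ → ℝ≥0∞
  | 0, i, j => if i = j then 1 else 0
  | k + 1, i, j => ∑' l : ℕ, matPow P k i l * P l j

/-- The potential `φ(i) = ∑_{k=0}^∞ ∑_j P^k(i,j) c(j)`. -/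
noncomputable def potential (P : ℕ → ℕ → ℝ≥0∞) (c : ℕ → ℝ≥0∞) (i : ℕ) : ℝ≥0∞ :=
  ∑' k : ℕ, ∑' j : ℕ, matPow P k i j * c j

/-- The Green matrix `G(i,j) = ∑_{k=0}^∞ P^k(i,j)`. -/
noncomputable def green (P : ℕ → ℕ → ℝ≥0∞) (i j : ℕ) : ℝ≥0∞ :=
  ∑' k : ℕ, matPow P k i j

/-- `P_n^{(k-)} = ∑_{i=0}^k P(n,i)`. -/
noncomputable def Pminus (P : ℕ → ℕ → ℝ≥0∞) (n k : ℕ) : ℝ≥0∞ :=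
  ∑ l ∈ Finset.range (k + 1), P n l

/-- `F P i n = F_n^{(i)}`: `F_i^{(i)} = 1` and
`F_n^{(i)} = (1/P(n,n+1)) ∑_{k=i}^{n-1} P_n^{(k-)} F_k^{(i)}` for `i < n`. -/
noncomputable def F (P : ℕ → ℕ → ℝ≥0∞) (i : ℕ) : ℕ → ℝ≥0∞
  | n =>
    if n ≤ i then 1
    else (P n (n + 1))⁻¹ *
      ∑ k ∈ (Finset.Ico i n).attach, Pminus P n k.1 * F P i k.1
  termination_by n => n
  decreasing_by
    have h := Finset.mem_Ico.mp k.2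
    omega

/-- The embedded chain of the `GI/M/1` queue with parameter `z`:
`P(i,0) = b_i = 1/z^(i+1)`, `P(i,j) = a_{i+1-j} = (z-1)/z^(i+2-j)` for `1 ≤ j ≤ i+1`,
and `P(i,j) = 0` for `j > i+1`. -/
noncomputable def giM1 (z : ℝ) : ℕ → ℕ → ℝ≥0∞ := fun i j =>
  if j = 0 then ENNReal.ofReal (1 / z ^ (i + 1))
  else if j ≤ i + 1 then ENNReal.ofReal ((z - 1) / z ^ (i + 2 - j))
  else 0

/-!
Both directions rest on the shift structure of the kernel: row `i + 1` is row `i` divided by `z`,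
followed by the new entry `(z - 1) / z` in column `i + 2`.

For `z > 2`, `f(j) = (z - 1)^{-j}` satisfies `c + P f = f` with the strictly positive defect
`c(j) = (z - 2) / z^{j + 1}`, so `G(i,j) c(j) ≤ ∑_k (P^k c)(i) ≤ f(i) < ∞`.

For `z ≤ 2`, if `h = G(·,0)` were finite it would solve `h = δ₀ + P h`. The shift structure turns
this into `(z - 1) Δg(n + 1) = Δg(n)` and `(z - 1) Δg(0) = -1` for `g = P h ≥ 0`, so every increment
of `g` is at most `-1` and `g` becomes negative.
-/

open Finset

section Kernel

variable (P : ℕ → ℕ → ℝ≥0∞)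

lemma matPow_succ_left (k i j : ℕ) :
    matPow P (k + 1) i j = ∑' l, P i l * matPow P k l j := by
  induction k generalizing i j with
  | zero =>
    simp only [matPow]
    rw [tsum_eq_single i (fun l hl => by simp [Ne.symm hl]),
      tsum_eq_single j (fun l hl => by simp [hl])]
    simp
  | succ k ih =>
    calc matPow P (k + 2) i j = ∑' l, ∑' m, P i m * (matPow P k m l * P l j) := by
          refine tsum_congr fun l => ?_
          simp_rw [ih, ← ENNReal.tsum_mul_right, mul_assoc]
      _ = ∑' m, P i m * matPow P (k + 1) m j := by
          rw [ENNReal.tsum_comm]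
          simp_rw [ENNReal.tsum_mul_left, matPow]

lemma tsum_matPow_zero_mul (c : ℕ → ℝ≥0∞) (i : ℕ) :
    ∑' j, matPow P 0 i j * c j = c i := by
  simp [matPow]

lemma tsum_matPow_succ_mul (c : ℕ → ℝ≥0∞) (k i : ℕ) :
    ∑' j, matPow P (k + 1) i j * c j = ∑' l, P i l * ∑' j, matPow P k l j * c j := by
  simp_rw [matPow_succ_left, ← ENNReal.tsum_mul_right, ← ENNReal.tsum_mul_left, mul_assoc]
  exact ENNReal.tsum_comm

lemma green_eq_ite_add_tsum (i j : ℕ) :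
    green P i j = (if i = j then 1 else 0) + ∑' l, P i l * green P l j := by
  rw [green, tsum_eq_zero_add' ENNReal.summable]
  simp_rw [matPow_succ_left, green, ← ENNReal.tsum_mul_left]
  rw [ENNReal.tsum_comm]
  rfl

lemma potential_le_of_add_le {c f : ℕ → ℝ≥0∞} (hf : ∀ i, c i + ∑' j, P i j * f j ≤ f i)
    (i : ℕ) : potential P c i ≤ f i := by
  have hpartial : ∀ n i, ∑ k ∈ range n, ∑' j, matPow P k i j * c j ≤ f i := by
    intro n
    induction n with
    | zero => simp
    | succ n ih =>
      intro i
      calc ∑ k ∈ range (n + 1), ∑' j, matPow P k i j * c j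
          = c i + ∑' l, P i l * ∑ k ∈ range n, ∑' j, matPow P k l j * c j := by
            simp_rw [sum_range_succ', tsum_matPow_succ_mul, tsum_matPow_zero_mul, mul_sum,
              Summable.tsum_finsetSum fun _ _ => ENNReal.summable, add_comm]
        _ ≤ c i + ∑' l, P i l * f l := by gcongr; exact ih _
        _ ≤ f i := hf i
  exact ENNReal.tsum_le_of_sum_range_le fun n => hpartial n i

lemma green_mul_le_potential (c : ℕ → ℝ≥0∞) (i j : ℕ) :
    green P i j * c j ≤ potential P c i := by
  rw [green, ← ENNReal.tsum_mul_right]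
  exact ENNReal.tsum_le_tsum fun k => ENNReal.le_tsum j

lemma green_lt_top_of_add_le {c f : ℕ → ℝ≥0∞} (hf : ∀ i, c i + ∑' j, P i j * f j ≤ f i)
    {i j : ℕ} (hcj : c j ≠ 0) (hfi : f i ≠ ∞) : green P i j < ∞ :=
  ENNReal.lt_top_of_mul_ne_top_left
    (ne_top_of_le_ne_top hfi ((green_mul_le_potential P c i j).trans (potential_le_of_add_le P hf i)))
    hcj

end Kernel

lemma exists_neg_of_le_sub_one {g : ℕ → ℝ} (hg : ∀ n, g (n + 1) ≤ g n - 1) : ∃ n, g n < 0 := by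
  have hlin : ∀ n : ℕ, g n ≤ g 0 - n := by
    intro n
    induction n with
    | zero => simp
    | succ n ih => push_cast; linarith [hg n]
  obtain ⟨n, hn⟩ := exists_nat_gt (g 0)
  exact ⟨n, by linarith [hlin n]⟩

lemma exists_neg_of_diff_recurrence {a : ℝ} (ha : 0 < a) (ha1 : a ≤ 1) {g : ℕ → ℝ}
    (h0 : a * (g 1 - g 0) = -1) (hs : ∀ n, a * (g (n + 2) - g (n + 1)) = g (n + 1) - g n) :
    ∃ n, g n < 0 := by
  refine exists_neg_of_le_sub_one fun n => ?_
  induction n with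
  | zero => nlinarith
  | succ n ih => nlinarith [hs n]

namespace GIM1

variable {z : ℝ}

noncomputable def kernelReal (z : ℝ) (i j : ℕ) : ℝ :=
  if j = 0 then 1 / z ^ (i + 1) else if j ≤ i + 1 then (z - 1) / z ^ (i + 2 - j) else 0

/-- The sum stops at `i + 1` because the chain is upward skip-free. -/
noncomputable def mulVec (z : ℝ) (h : ℕ → ℝ) (i : ℕ) : ℝ :=
  ∑ l ∈ range (i + 2), kernelReal z i l * h l

lemma giM1_eq_ofReal (i j : ℕ) : giM1 z i j = ENNReal.ofReal (kernelReal z i j) := by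
  unfold giM1 kernelReal
  split_ifs <;> simp

lemma kernelReal_nonneg (hz : 1 < z) (i j : ℕ) : 0 ≤ kernelReal z i j := by
  have : 0 < z := by linarith
  unfold kernelReal
  split_ifs
  · positivity
  · exact div_nonneg (by linarith) (by positivity)
  · exact le_rfl

lemma kernelReal_eq_zero {i j : ℕ} (h : i + 1 < j) : kernelReal z i j = 0 := by
  simp [kernelReal, show j ≠ 0 by omega, show ¬j ≤ i + 1 by omega]

lemma kernelReal_succ_left {i l : ℕ} (hl : l ≤ i + 1) :
    kernelReal z (i + 1) l = kernelReal z i l / z := by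
  unfold kernelReal
  rcases Nat.eq_zero_or_pos l with rfl | hl0
  · rw [if_pos rfl, if_pos rfl, pow_succ, div_div]
  · rw [if_neg hl0.ne', if_neg hl0.ne', if_pos (by omega : l ≤ i + 1 + 1), if_pos hl,
      show i + 1 + 2 - l = i + 2 - l + 1 by omega, pow_succ, div_div]

lemma kernelReal_succ_diag (i : ℕ) : kernelReal z (i + 1) (i + 2) = (z - 1) / z := by
  simp [kernelReal, show i + 1 + 2 - (i + 2) = 1 by omega]

lemma mulVec_zero (h : ℕ → ℝ) : mulVec z h 0 = (h 0 + (z - 1) * h 1) / z := by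
  rw [mulVec, sum_range_succ, sum_range_one, kernelReal, kernelReal, if_pos rfl,
    if_neg one_ne_zero, if_pos le_rfl]
  norm_num
  ring

lemma mulVec_succ (h : ℕ → ℝ) (i : ℕ) :
    mulVec z h (i + 1) = (mulVec z h i + (z - 1) * h (i + 2)) / z := by
  rw [mulVec, sum_range_succ, kernelReal_succ_diag, mulVec, add_div, sum_div]
  congr 1
  · refine sum_congr rfl fun l hl => ?_
    rw [kernelReal_succ_left (by simp at hl; omega), div_mul_eq_mul_div]
  · ring

lemma mulVec_nonneg (hz : 1 < z) {h : ℕ → ℝ} (hh : ∀ l, 0 ≤ h l) (i : ℕ) : 0 ≤ mulVec z h i :=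
  sum_nonneg fun l _ => mul_nonneg (kernelReal_nonneg hz i l) (hh l)

lemma tsum_giM1_mul_ofReal (hz : 1 < z) {h : ℕ → ℝ} (hh : ∀ l, 0 ≤ h l) (i : ℕ) :
    ∑' l, giM1 z i l * ENNReal.ofReal (h l) = ENNReal.ofReal (mulVec z h i) := by
  rw [tsum_eq_sum (s := range (i + 2)) fun l hl => by
      rw [giM1_eq_ofReal, kernelReal_eq_zero (by simp at hl; omega), ENNReal.ofReal_zero, zero_mul],
    mulVec, ENNReal.ofReal_sum_of_nonneg fun l _ => mul_nonneg (kernelReal_nonneg hz i l) (hh l)]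
  simp_rw [giM1_eq_ofReal, ENNReal.ofReal_mul (kernelReal_nonneg hz _ _)]

lemma mulVec_inv_sub_one_pow (hz : 1 < z) (i : ℕ) :
    mulVec z (fun j => (z - 1)⁻¹ ^ j) i = (z - 1)⁻¹ ^ i - (z - 2) / z ^ (i + 1) := by
  have hz0 : z ≠ 0 := by linarith
  have hz1 : z - 1 ≠ 0 := by linarith
  induction i with
  | zero =>
    rw [mulVec_zero]
    field_simp
    ring
  | succ i ih =>
    have hr : (z - 1) * (z - 1)⁻¹ = 1 := mul_inv_cancel₀ hz1
    have hpow : (z - 2) / z ^ (i + 2) * z = (z - 2) / z ^ (i + 1) := by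
      rw [pow_succ, div_mul_eq_mul_div, mul_div_mul_right _ _ hz0]
    rw [mulVec_succ, ih, div_eq_iff hz0]
    linear_combination (-(z - 1)⁻¹ ^ i * (1 - (z - 1)⁻¹)) * hr + hpow

theorem green_lt_top (hz : 2 < z) (i j : ℕ) : green (giM1 z) i j < ∞ := by
  have hz1 : 1 < z := by linarith
  have hr : ∀ j : ℕ, 0 ≤ (z - 1)⁻¹ ^ j := fun j => pow_nonneg (inv_nonneg.mpr (by linarith)) j
  have hc : ∀ j : ℕ, 0 < (z - 2) / z ^ (j + 1) := fun j => div_pos (by linarith) (by positivity)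
  refine green_lt_top_of_add_le _ (c := fun j => ENNReal.ofReal ((z - 2) / z ^ (j + 1)))
    (f := fun j => ENNReal.ofReal ((z - 1)⁻¹ ^ j)) (fun i => le_of_eq ?_)
    (ENNReal.ofReal_pos.mpr (hc j)).ne' ENNReal.ofReal_ne_top
  rw [tsum_giM1_mul_ofReal hz1 hr, ← ENNReal.ofReal_add (hc i).le (mulVec_nonneg hz1 hr i),
    mulVec_inv_sub_one_pow hz1, add_sub_cancel]

lemma toReal_green_eq (hz : 1 < z) (hfin : ∀ i, green (giM1 z) i 0 ≠ ∞) (i : ℕ) :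
    (green (giM1 z) i 0).toReal =
      (if i = 0 then 1 else 0) + mulVec z (fun l => (green (giM1 z) l 0).toReal) i := by
  have hH : ∀ l, 0 ≤ (green (giM1 z) l 0).toReal := fun _ => ENNReal.toReal_nonneg
  have htsum : ∑' l, giM1 z i l * green (giM1 z) l 0 =
      ENNReal.ofReal (mulVec z (fun l => (green (giM1 z) l 0).toReal) i) := by
    rw [← tsum_giM1_mul_ofReal hz hH]
    simp_rw [ENNReal.ofReal_toReal (hfin _)]
  rw [green_eq_ite_add_tsum, htsum]
  split_ifs
  · rw [ENNReal.toReal_add ENNReal.one_ne_top ENNReal.ofReal_ne_top, ENNReal.toReal_one,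
      ENNReal.toReal_ofReal (mulVec_nonneg hz hH i)]
  · rw [zero_add, zero_add, ENNReal.toReal_ofReal (mulVec_nonneg hz hH i)]

theorem exists_green_eq_top (hz : 1 < z) (hz2 : z ≤ 2) : ∃ i, green (giM1 z) i 0 = ∞ := by
  by_contra! hfin
  set H := fun l => (green (giM1 z) l 0).toReal
  have hH : ∀ i, H i = (if i = 0 then 1 else 0) + mulVec z H i := toReal_green_eq hz hfin
  have hz0 : z ≠ 0 := by linarith
  have h0 : (z - 1) * (mulVec z H 1 - mulVec z H 0) = -1 := by
    have h := mulVec_zero (z := z) H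
    rw [hH 0, hH 1, if_pos rfl, if_neg one_ne_zero, zero_add, eq_div_iff hz0] at h
    linarith
  have hs : ∀ n, (z - 1) * (mulVec z H (n + 2) - mulVec z H (n + 1)) =
      mulVec z H (n + 1) - mulVec z H n := by
    intro n
    have h := mulVec_succ (z := z) H n
    rw [hH (n + 2), if_neg (by omega), zero_add, eq_div_iff hz0] at h
    linarith
  obtain ⟨n, hn⟩ := exists_neg_of_diff_recurrence (by linarith) (by linarith) h0 hs
  exact hn.not_ge (mulVec_nonneg hz (fun _ => ENNReal.toReal_nonneg) n)

end GIM1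

theorem giM1_transient_iff (z : ℝ) (hz : 1 < z) :
    (∀ i j : ℕ, green (giM1 z) i j < ∞) ↔ 2 < z := by
  refine ⟨fun hfin => ?_, GIM1.green_lt_top⟩
  by_contra hz2
  obtain ⟨i, hi⟩ := GIM1.exists_green_eq_top hz (not_lt.mp hz2)
  exact (hfin i 0).ne hi
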